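/- Let P, Q, F_1, …, F_n, K_1, …, K_n be polynomials in ℝ[x,y] such that P·∂F_i/∂y − Q·∂F_i/∂x = −F_i·K_i for every i = 1,…,n (as polynomial identities), and let α_1, …, α_n ∈ ℝ satisfy ∂Q/∂x − ∂P/∂y = Σ_{i=1}^n α_i·K_i. Let U ⊆ ℝ² be an open set on which F_i(x,y) > 0 for every i, and define μ : U → ℝ by μ(x,y) = Π_{i=1}^n F_i(x,y)^{−α_i} (real powers). Then the 1-form μ·(P dx + Q dy) is closed on U, i.e. ∂(μ·Q)/∂x = ∂(μ·P)/∂y at every point of U. -/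

import Mathlib

open MvPolynomial

private lemma hasDerivAt_eval_fst (p : MvPolynomial (Fin 2) ℝ) (a b : ℝ) :
    HasDerivAt (fun t => eval ![t, b] p) (eval ![a, b] (pderiv 0 p)) a := by
  induction p using MvPolynomial.induction_on with
  | C c =>
      simp only [eval_C, pderiv_C, map_zero]
      exact hasDerivAt_const a c
  | add p q hp hq =>
      simp only [map_add]
      exact hp.add hq
  | mul_X p i hp =>
      fin_cases i <;> simp only [Fin.mk_zero, Fin.mk_one, Fin.isValue] at *
      · have h := hp.fun_mul (hasDerivAt_id a)
        simp only [map_mul, pderiv_mul, pderiv_X_self, eval_X, Matrix.cons_val_zero,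
          map_add, mul_one, map_one]
        exact h.congr_deriv (by simp)
      · have h := hp.mul_const b
        simp only [map_mul, pderiv_mul, eval_X, Matrix.cons_val_one, Matrix.head_cons,
          map_add, map_one]
        rw [show (pderiv 0 (X 1 : MvPolynomial (Fin 2) ℝ)) = 0 from pderiv_X_of_ne (by decide)]
        simp only [map_zero, mul_zero, add_zero, zero_mul]
        exact h

private lemma hasDerivAt_eval_snd (p : MvPolynomial (Fin 2) ℝ) (a b : ℝ) :
    HasDerivAt (fun t => eval ![a, t] p) (eval ![a, b] (pderiv 1 p)) b := by
  induction p using MvPolynomial.induction_on with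
  | C c =>
      simp only [eval_C, pderiv_C, map_zero]
      exact hasDerivAt_const b c
  | add p q hp hq =>
      simp only [map_add]
      exact hp.add hq
  | mul_X p i hp =>
      fin_cases i <;> simp only [Fin.mk_zero, Fin.mk_one, Fin.isValue] at *
      · have h := hp.mul_const a
        simp only [map_mul, pderiv_mul, eval_X, Matrix.cons_val_zero, map_add]
        rw [show (pderiv 1 (X 0 : MvPolynomial (Fin 2) ℝ)) = 0 from pderiv_X_of_ne (by decide)]
        simp only [map_zero, mul_zero, add_zero, zero_mul]
        exact h
      · have h := hp.fun_mul (hasDerivAt_id b)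
        simp only [map_mul, pderiv_mul, pderiv_X_self, eval_X, Matrix.cons_val_one,
          Matrix.head_cons, map_add, mul_one, map_one]
        exact h.congr_deriv (by simp)

theorem darboux_integrating_factor
    (n : ℕ) (P Q : MvPolynomial (Fin 2) ℝ)
    (F K : Fin n → MvPolynomial (Fin 2) ℝ)
    (hint : ∀ i, P * pderiv 1 (F i) - Q * pderiv 0 (F i) = -(F i * K i))
    (α : Fin n → ℝ)
    (hdiv : pderiv 0 Q - pderiv 1 P = ∑ i, C (α i) * K i)
    (U : Set (ℝ × ℝ)) (hU : IsOpen U)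
    (hFpos : ∀ z ∈ U, ∀ i, 0 < eval ![z.1, z.2] (F i)) :
    ∀ z ∈ U,
      deriv (fun t : ℝ =>
          (∏ i, (eval ![t, z.2] (F i)) ^ (-(α i))) * eval ![t, z.2] Q) z.1
      = deriv (fun t : ℝ =>
          (∏ i, (eval ![z.1, t] (F i)) ^ (-(α i))) * eval ![z.1, t] P) z.2 := by
  rintro ⟨a, b⟩ hz
  dsimp only
  have hF : ∀ i, 0 < eval ![a, b] (F i) := hFpos (a, b) hz
  -- derivative facts
  have hFd1 : ∀ i, HasDerivAt (fun t => eval ![t, b] (F i) ^ (-(α i)))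
      (eval ![a, b] (pderiv 0 (F i)) * (-(α i)) * eval ![a, b] (F i) ^ (-(α i) - 1)) a :=
    fun i => (hasDerivAt_eval_fst (F i) a b).rpow_const (Or.inl (hF i).ne')
  have hFd2 : ∀ i, HasDerivAt (fun t => eval ![a, t] (F i) ^ (-(α i)))
      (eval ![a, b] (pderiv 1 (F i)) * (-(α i)) * eval ![a, b] (F i) ^ (-(α i) - 1)) b :=
    fun i => (hasDerivAt_eval_snd (F i) a b).rpow_const (Or.inl (hF i).ne')
  have hprod1 := HasDerivAt.fun_finsetProd (u := Finset.univ) (fun i _ => hFd1 i)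
  have hprod2 := HasDerivAt.fun_finsetProd (u := Finset.univ) (fun i _ => hFd2 i)
  have hL := (hprod1.fun_mul (hasDerivAt_eval_fst Q a b)).deriv
  have hR := (hprod2.fun_mul (hasDerivAt_eval_snd P a b)).deriv
  rw [hL, hR]
  clear hL hR hprod1 hprod2 hFd1 hFd2
  simp only [smul_eq_mul]
  set μ : ℝ := ∏ i, eval ![a, b] (F i) ^ (-(α i)) with hμ
  -- rewrite the sums
  have hS : ∀ (G : Fin n → ℝ),
      (∑ i, (∏ j ∈ Finset.univ.erase i, eval ![a, b] (F j) ^ (-(α j))) *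
        (G i * (-(α i)) * eval ![a, b] (F i) ^ (-(α i) - 1)))
      = ∑ i, μ * (-(α i) * (G i / eval ![a, b] (F i))) := by
    intro G
    refine Finset.sum_congr rfl fun i _ => ?_
    rw [show (-(α i) - 1 : ℝ) = -(α i) - 1 from rfl, Real.rpow_sub (hF i), Real.rpow_one, hμ,
      ← Finset.mul_prod_erase Finset.univ _ (Finset.mem_univ i)]
    ring
  rw [hS, hS]
  -- evaluated hypotheses
  have hKi : ∀ i, eval ![a, b] Q * eval ![a, b] (pderiv 0 (F i)) - eval ![a, b] P * eval ![a, b] (pderiv 1 (F i)) = eval ![a, b] (F i) * eval ![a, b] (K i) := by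
    intro i
    have h := congrArg (eval ![a, b]) (hint i)
    simp only [map_sub, map_mul, map_neg] at h
    linarith
  have hsum : eval ![a, b] (pderiv 0 Q) - eval ![a, b] (pderiv 1 P) = ∑ i, α i * eval ![a, b] (K i) := by
    have h := congrArg (eval ![a, b]) hdiv
    simpa only [map_sub, map_sum, map_mul, eval_C] using h
  -- key per-term identity
  have key : (∑ i, α i * (eval ![a, b] Q * eval ![a, b] (pderiv 0 (F i)) / eval ![a, b] (F i)))
      - (∑ i, α i * (eval ![a, b] P * eval ![a, b] (pderiv 1 (F i)) / eval ![a, b] (F i)))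
      = eval ![a, b] (pderiv 0 Q) - eval ![a, b] (pderiv 1 P) := by
    rw [← Finset.sum_sub_distrib, hsum]
    refine Finset.sum_congr rfl fun i _ => ?_
    have h := hKi i
    have hne := (hF i).ne'
    field_simp
    linear_combination (α i) * h
  have e1 : (∑ i, μ * (-(α i) * (eval ![a, b] (pderiv 0 (F i)) / eval ![a, b] (F i)))) * eval ![a, b] Q
      + μ * (∑ i, α i * (eval ![a, b] Q * eval ![a, b] (pderiv 0 (F i)) / eval ![a, b] (F i))) = 0 := by
    rw [Finset.sum_mul, Finset.mul_sum, ← Finset.sum_add_distrib]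
    exact Finset.sum_eq_zero fun i _ => by ring
  have e2 : (∑ i, μ * (-(α i) * (eval ![a, b] (pderiv 1 (F i)) / eval ![a, b] (F i)))) * eval ![a, b] P
      + μ * (∑ i, α i * (eval ![a, b] P * eval ![a, b] (pderiv 1 (F i)) / eval ![a, b] (F i))) = 0 := by
    rw [Finset.sum_mul, Finset.mul_sum, ← Finset.sum_add_distrib]
    exact Finset.sum_eq_zero fun i _ => by ring
  linear_combination e1 - e2 - μ * key
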